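/- For all sufficiently large n, the size-Ramsey number of the path on n vertices satisfies r̂(P_n) < 137n. -/

import Mathlib

/-!
Let `G` be a graph on `7n` vertices with `137n - 1` edges in which an edge joins any two disjoint
sets of `n` vertices. Such a graph exists by counting: with `K = C(7n, 2)` and `M = 137n - 1`, the
`M`-edge sets missing all edges between two given disjoint `n`-sets are at most a fraction
`(1 - M/K)^{n²} ≤ e^{-274n/49}` of all, while there are at most `C(7n, n) C(6n, n) ≤ (7⁷/5⁵)ⁿ`
such pairs, and `7⁷/5⁵ < e^{274/49}`.

Depth-first search in a graph with no path on `n` vertices stops, at any prescribed number `d` of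
finished vertices, with a set `D` of `d` finished vertices, a stack of fewer than `n` vertices and
a set `U` of unvisited vertices with no edge between `D` and `U`. Running it first in the blue
and then in the red graph of a colouring of `G` produces two pairs of disjoint sets without any
edge of `G` between them, whose sizes cannot all stay below `n`.
-/

open Finset

namespace Finset

variable {α : Type*} [DecidableEq α]

theorem exists_subset_card_eq_forall_not_disjoint {ι : Type*} (E : Finset α) (I : Finset ι)
    (f : ι → Finset α) {m M : ℕ} (hf : ∀ i ∈ I, f i ⊆ E)
    (hm : ∀ i ∈ I, m ≤ #(f i)) (hI : #I * (#E - m).choose M < (#E).choose M) :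
    ∃ X ⊆ E, #X = M ∧ ∀ i ∈ I, ¬ Disjoint X (f i) := by
  have hbad : #(I.biUnion fun i => (E \ f i).powersetCard M) < #(E.powersetCard M) :=
    calc #(I.biUnion fun i => (E \ f i).powersetCard M)
        ≤ ∑ i ∈ I, #((E \ f i).powersetCard M) := card_biUnion_le
      _ ≤ ∑ _i ∈ I, (#E - m).choose M := sum_le_sum fun i hi => by
        rw [card_powersetCard, card_sdiff_of_subset (hf i hi)]
        exact Nat.choose_le_choose M (Nat.sub_le_sub_left (hm i hi) _)
      _ = #I * (#E - m).choose M := by rw [sum_const, smul_eq_mul]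
      _ < #(E.powersetCard M) := by rwa [card_powersetCard]
  obtain ⟨X, hX, hXbad⟩ := exists_mem_notMem_of_card_lt_card hbad
  rw [mem_powersetCard] at hX
  refine ⟨X, hX.1, hX.2, fun i hi hdisj => hXbad (mem_biUnion.mpr ⟨i, hi, ?_⟩)⟩
  exact mem_powersetCard.mpr ⟨subset_sdiff.mpr ⟨hX.1, hdisj⟩, hX.2⟩

theorem card_inter_add_card_inter_of_subset_union {D U X : Finset α} (hDU : Disjoint D U)
    (hX : X ⊆ D ∪ U) : #(X ∩ D) + #(X ∩ U) = #X := by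
  rw [← card_union_of_disjoint (hDU.mono inter_subset_right inter_subset_right),
    ← inter_union_distrib_left, inter_eq_left.mpr hX]

theorem card_inter_add_card_inter_le {Z W : Finset α}
    (hZW : Disjoint Z W) (Y : Finset α) : #(Z ∩ Y) + #(W ∩ Y) ≤ #Y := by
  rw [← card_union_of_disjoint (hZW.mono inter_subset_left inter_subset_left)]
  exact card_le_card (union_subset inter_subset_right inter_subset_right)

theorem card_sigma_powersetCard_sdiff (S : Finset α) (n : ℕ) :
    #((S.powersetCard n).sigma fun A => (S \ A).powersetCard n) =
      (#S).choose n * (#S - n).choose n := by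
  rw [card_sigma, ← card_powersetCard n S, ← smul_eq_mul, ← sum_const]
  refine sum_congr rfl fun A hA => ?_
  obtain ⟨hAS, hAcard⟩ := mem_powersetCard.mp hA
  rw [card_powersetCard, card_sdiff_of_subset hAS, hAcard]

end Finset

namespace Nat

theorem choose_add_mul_pow_mul_pow_le (a b : ℕ) :
    (a + b).choose a * (a ^ a * b ^ b) ≤ (a + b) ^ (a + b) := by
  have hterm := single_le_sum (f := fun m => a ^ m * b ^ (a + b - m) * (a + b).choose m)
    (fun _ _ => Nat.zero_le _) (mem_range.mpr (by omega : a < a + b + 1))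
  have hbinom := add_pow a b (a + b)
  simp only [Nat.cast_id] at hbinom
  rw [← hbinom, Nat.add_sub_cancel_left] at hterm
  exact le_of_eq_of_le (by ring) hterm

theorem choose_mul_choose_mul_pow_le (n : ℕ) :
    (7 * n).choose n * (6 * n).choose n * (5 ^ 5) ^ n ≤ (7 ^ 7) ^ n := by
  rcases n.eq_zero_or_pos with rfl | hn
  · simp
  have h₁ := choose_add_mul_pow_mul_pow_le n (6 * n)
  have h₂ := choose_add_mul_pow_mul_pow_le n (5 * n)
  rw [show n + 6 * n = 7 * n by ring] at h₁
  rw [show n + 5 * n = 6 * n by ring] at h₂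
  have hprod := Nat.mul_le_mul h₁ h₂
  have h₅ : (5 * n) ^ (5 * n) = (5 ^ 5) ^ n * n ^ (5 * n) := by rw [mul_pow, pow_mul]
  have h₇ : (7 * n) ^ (7 * n) = (7 ^ 7) ^ n * n ^ (7 * n) := by rw [mul_pow, pow_mul]
  have hpos : 0 < (6 * n) ^ (6 * n) * n ^ (7 * n) := by positivity
  refine Nat.le_of_mul_le_mul_right (le_of_eq_of_le ?_ (hprod.trans_eq ?_)) hpos
  · rw [h₅]; ring
  · rw [h₇]; ring

theorem choose_mul_le_choose_succ_mul {x K : ℕ} (M : ℕ) (hx : x + 1 ≤ K) :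
    x.choose M * K ≤ (x + 1).choose M * (K - M) := by
  have hratio : (x + 1 - M) * K ≤ (K - M) * (x + 1) := by
    rw [Nat.sub_mul, Nat.sub_mul, mul_comm K]
    exact Nat.sub_le_sub_left (Nat.mul_le_mul_left M hx) _
  refine Nat.le_of_mul_le_mul_right ?_ (Nat.succ_pos x)
  calc x.choose M * K * (x + 1) = (x + 1).choose M * ((x + 1 - M) * K) := by
        rw [mul_right_comm, choose_mul_succ_eq, mul_assoc]
    _ ≤ (x + 1).choose M * ((K - M) * (x + 1)) := Nat.mul_le_mul_left _ hratio
    _ = (x + 1).choose M * (K - M) * (x + 1) := by ring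

theorem choose_sub_mul_pow_le {a K : ℕ} (M : ℕ) (ha : a ≤ K) :
    (K - a).choose M * K ^ a ≤ K.choose M * (K - M) ^ a := by
  induction a with
  | zero => simp
  | succ a ih =>
    have hstep := choose_mul_le_choose_succ_mul M (x := K - (a + 1)) (K := K) (by omega)
    rw [show K - (a + 1) + 1 = K - a by omega] at hstep
    calc (K - (a + 1)).choose M * K ^ (a + 1) = (K - (a + 1)).choose M * K * K ^ a := by ring
      _ ≤ (K - a).choose M * (K - M) * K ^ a := Nat.mul_le_mul_right _ hstep
      _ = (K - a).choose M * K ^ a * (K - M) := by ring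
      _ ≤ K.choose M * (K - M) ^ a * (K - M) := Nat.mul_le_mul_right _ (ih (by omega))
      _ = K.choose M * (K - M) ^ (a + 1) := by ring

end Nat

open Real in
theorem seven_pow_seven_lt_five_pow_five_mul_exp : (7 : ℝ) ^ 7 < 5 ^ 5 * exp (274 / 49) := by
  have he : (2.7182818283 : ℝ) ^ 5 < exp 1 ^ 5 :=
    pow_lt_pow_left₀ exp_one_gt_d9 (by norm_num) (by norm_num)
  have hseries := sum_le_exp_of_nonneg (x := 29 / 49) (by norm_num) 4
  simp only [sum_range_succ, sum_range_zero] at hseries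
  rw [show (274 : ℝ) / 49 = (5 : ℕ) * 1 + 29 / 49 by norm_num, exp_add, exp_nat_mul]
  norm_num [Nat.factorial] at hseries he ⊢
  nlinarith [exp_pos 1]

open Real in
theorem seven_pow_seven_mul_sub_pow_lt {n K M : ℕ} (hK : 0 < K) (hMK : M ≤ K)
    (h : 274 * K ≤ 49 * (n * M)) : 7 ^ 7 * (K - M) ^ n < 5 ^ 5 * K ^ n := by
  have hKr : (0 : ℝ) < K := by exact_mod_cast hK
  set x : ℝ := M / K
  have hsub : ((K - M : ℕ) : ℝ) ≤ K * exp (-x) :=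
    calc ((K - M : ℕ) : ℝ) = K * (1 - x) := by
          rw [Nat.cast_sub hMK, mul_one_sub, mul_div_cancel₀ _ hKr.ne']
      _ ≤ K * exp (-x) := by gcongr; exact one_sub_le_exp_neg x
  have hnx : 274 / 49 ≤ n * x := by
    rw [div_le_iff₀ (by norm_num), mul_div_assoc', div_mul_eq_mul_div, le_div_iff₀ hKr]
    exact_mod_cast h.trans_eq (by ring)
  have hexp : 7 ^ 7 * exp (-(274 / 49)) < (5 ^ 5 : ℝ) := by
    rw [exp_neg, ← div_eq_mul_inv, div_lt_iff₀ (exp_pos _)]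
    exact seven_pow_seven_lt_five_pow_five_mul_exp
  have key : (7 : ℝ) ^ 7 * ((K - M : ℕ) : ℝ) ^ n < 5 ^ 5 * (K : ℝ) ^ n :=
    calc (7 : ℝ) ^ 7 * ((K - M : ℕ) : ℝ) ^ n ≤ 7 ^ 7 * (K * exp (-x)) ^ n := by gcongr
      _ = (K : ℝ) ^ n * (7 ^ 7 * exp (-(n * x))) := by
        rw [mul_pow, ← exp_nat_mul]; ring_nf
      _ ≤ (K : ℝ) ^ n * (7 ^ 7 * exp (-(274 / 49))) := by gcongr
      _ < (K : ℝ) ^ n * 5 ^ 5 := by gcongr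
      _ = 5 ^ 5 * (K : ℝ) ^ n := mul_comm _ _
  exact_mod_cast key

theorem mul_choose_sub_sq_lt {A K M n b c : ℕ} (hA : A * c ^ n ≤ b ^ n)
    (hKM : b * (K - M) ^ n < c * K ^ n) (hn : 0 < n) (hnK : n ^ 2 ≤ K) (hMK : M ≤ K) :
    A * (K - n ^ 2).choose M < K.choose M := by
  refine Nat.lt_of_mul_lt_mul_right (a := c ^ n * K ^ n ^ 2) ?_
  calc A * (K - n ^ 2).choose M * (c ^ n * K ^ n ^ 2)
      = A * c ^ n * ((K - n ^ 2).choose M * K ^ n ^ 2) := by ring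
    _ ≤ b ^ n * (K.choose M * (K - M) ^ n ^ 2) :=
      Nat.mul_le_mul hA (Nat.choose_sub_mul_pow_le M hnK)
    _ = K.choose M * (b * (K - M) ^ n) ^ n := by ring
    _ < K.choose M * (c * K ^ n) ^ n :=
      Nat.mul_lt_mul_of_pos_left (Nat.pow_lt_pow_left hKM hn.ne') (Nat.choose_pos hMK)
    _ = K.choose M * (c ^ n * K ^ n ^ 2) := by ring

theorem choose_mul_choose_mul_choose_lt {n : ℕ} (hn : 6 ≤ n) :
    (7 * n).choose n * (6 * n).choose n * ((7 * n).choose 2 - n ^ 2).choose (137 * n - 1) <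
      ((7 * n).choose 2).choose (137 * n - 1) := by
  have hK : 2 * (7 * n).choose 2 = 7 * n * (7 * n - 1) := by
    rw [Nat.choose_two_right, Nat.mul_div_cancel' (Nat.even_mul_pred_self _).two_dvd]
  obtain ⟨m, rfl⟩ : ∃ m, n = m + 6 := ⟨n - 6, by omega⟩
  rw [show 7 * (m + 6) - 1 = 7 * m + 41 by omega] at hK
  rw [show 137 * (m + 6) - 1 = 137 * m + 821 by omega]
  exact mul_choose_sub_sq_lt (Nat.choose_mul_choose_mul_pow_le _)
    (seven_pow_seven_mul_sub_pow_lt (by nlinarith) (by nlinarith) (by nlinarith)) (by omega)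
    (by nlinarith) (by nlinarith)

namespace SimpleGraph

variable {V : Type*} (F : SimpleGraph V)

def HasPath (n : ℕ) : Prop :=
  ∃ (u v : V) (p : F.Walk u v), p.IsPath ∧ p.support.length = n

def NoEdgeBetween (A B : Finset V) : Prop :=
  ∀ a ∈ A, ∀ b ∈ B, ¬ F.Adj a b

def IsJoined (k : ℕ) : Prop :=
  ∀ A B : Finset V, Disjoint A B → k ≤ #A → k ≤ #B → ∃ a ∈ A, ∃ b ∈ B, F.Adj a b

variable {F}

theorem hasPath_of_isChain {l : List V} (hchain : l.IsChain F.Adj) (hnodup : l.Nodup)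
    (hl : l ≠ []) : F.HasPath l.length :=
  ⟨_, _, Walk.ofSupport l hl hchain, by rwa [Walk.isPath_def, Walk.support_ofSupport],
    by rw [Walk.support_ofSupport]⟩

theorem NoEdgeBetween.symm {A B : Finset V} (h : F.NoEdgeBetween A B) : F.NoEdgeBetween B A :=
  fun b hb a ha hba => h a ha b hb hba.symm

theorem NoEdgeBetween.mono {A B A' B' : Finset V} (h : F.NoEdgeBetween A B) (hA : A' ⊆ A)
    (hB : B' ⊆ B) : F.NoEdgeBetween A' B' :=
  fun a ha b hb => h a (hA ha) b (hB hb)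

theorem IsJoined.pos {G : SimpleGraph V} {k : ℕ} (hG : G.IsJoined k) : 0 < k := by
  by_contra hk
  obtain ⟨a, ha, -⟩ := hG ∅ ∅ (disjoint_empty_left ∅) (by omega) (by omega)
  simp at ha

theorem IsJoined.card_lt_or_card_lt {G F₁ F₂ : SimpleGraph V} {k : ℕ} (hG : G.IsJoined k)
    (hcover : G ≤ F₁ ⊔ F₂) {A B : Finset V} (hAB : Disjoint A B) (h₁ : F₁.NoEdgeBetween A B)
    (h₂ : F₂.NoEdgeBetween A B) : #A < k ∨ #B < k := by
  by_contra! hk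
  obtain ⟨a, ha, b, hb, hab⟩ := hG A B hAB hk.1 hk.2
  rcases hcover hab with h | h
  exacts [h₁ a ha b hb h, h₂ a ha b hb h]

variable (F) in
/-- A state of depth-first search inside `S`: `U` is the set of unvisited vertices, the stack `l`
(top first) is the current path, and the finished vertices are those of `S` outside `U` and `l`. -/
structure IsDFSState (n : ℕ) (S U : Finset V) (l : List V) : Prop where
  isChain : l.IsChain F.Adj
  nodup : l.Nodup
  length_lt : l.length < n
  unvisited_subset : U ⊆ S
  stack_subset : ∀ a ∈ l, a ∈ S
  notMem_unvisited : ∀ a ∈ l, a ∉ U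
  noEdge_finished : ∀ x ∈ S, x ∉ U → x ∉ l → ∀ u ∈ U, ¬ F.Adj x u

namespace IsDFSState

variable {n : ℕ} {S : Finset V}

theorem init (hn : 0 < n) : F.IsDFSState n S S [] where
  isChain := .nil
  nodup := .nil
  length_lt := hn
  unvisited_subset := subset_rfl
  stack_subset := by simp
  notMem_unvisited := by simp
  noEdge_finished := fun _ hx hxS => absurd hx hxS

variable [DecidableEq V]

theorem push {U : Finset V} {l : List V} (h : F.IsDFSState n S U l) (hF : ¬ F.HasPath n)
    {x : V} (hx : x ∈ U) (hadj : ∀ a ∈ l.head?, F.Adj x a) :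
    F.IsDFSState n S (U.erase x) (x :: l) :=
  have hchain : (x :: l).IsChain F.Adj := List.isChain_cons.mpr ⟨hadj, h.isChain⟩
  have hnodup : (x :: l).Nodup :=
    List.nodup_cons.mpr ⟨fun hxl => h.notMem_unvisited x hxl hx, h.nodup⟩
  { isChain := hchain
    nodup := hnodup
    length_lt := lt_of_le_of_ne h.length_lt
      fun heq => hF (heq ▸ hasPath_of_isChain hchain hnodup (List.cons_ne_nil x l))
    unvisited_subset := (erase_subset x U).trans h.unvisited_subset
    stack_subset := by
      simp only [List.mem_cons, forall_eq_or_imp]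
      exact ⟨h.unvisited_subset hx, h.stack_subset⟩
    notMem_unvisited := by
      simp only [List.mem_cons, forall_eq_or_imp, notMem_erase, not_false_eq_true, true_and]
      exact fun a ha haU => h.notMem_unvisited a ha (mem_of_mem_erase haU)
    noEdge_finished y hy hyU hyl u hu := by
      simp only [List.mem_cons, not_or] at hyl
      exact h.noEdge_finished y hy (fun hyU' => hyU (mem_erase.mpr ⟨hyl.1, hyU'⟩)) hyl.2 u
        (mem_of_mem_erase hu) }

theorem pop {U : Finset V} {l : List V} {a : V} (h : F.IsDFSState n S U (a :: l))
    (ha : ∀ u ∈ U, ¬ F.Adj a u) : F.IsDFSState n S U l where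
  isChain := h.isChain.tail
  nodup := (List.nodup_cons.mp h.nodup).2
  length_lt := (Nat.lt_succ_self _).trans h.length_lt
  unvisited_subset := h.unvisited_subset
  stack_subset b hb := h.stack_subset b (List.mem_cons_of_mem a hb)
  notMem_unvisited b hb := h.notMem_unvisited b (List.mem_cons_of_mem a hb)
  noEdge_finished x hx hxU hxl := by
    by_cases hxa : x = a
    · exact hxa ▸ ha
    · exact h.noEdge_finished x hx hxU (by simp [hxa, hxl])

/-- A push keeps `#U + l.length` and a pop lowers it by one, so the search passes through every
smaller value. -/
theorem exists_card_add_length_eq {U : Finset V} {l : List V} (h : F.IsDFSState n S U l)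
    (hF : ¬ F.HasPath n) {t : ℕ} (ht : t ≤ #U + l.length) :
    ∃ U' l', F.IsDFSState n S U' l' ∧ #U' + l'.length = t := by
  by_cases hdone : #U + l.length = t
  · exact ⟨U, l, h, hdone⟩
  by_cases hpush : ∃ x ∈ U, ∀ a ∈ l.head?, F.Adj x a
  · obtain ⟨x, hx, hadj⟩ := hpush
    have hcard := card_erase_of_mem hx
    have := card_pos.mpr ⟨x, hx⟩
    exact (h.push hF hx hadj).exists_card_add_length_eq hF
      (by simp only [List.length_cons]; omega)
  · push Not at hpush
    obtain ⟨a, l, rfl⟩ : ∃ a r, l = a :: r := by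
      refine List.exists_cons_of_ne_nil fun hl => ?_
      subst hl
      obtain ⟨x, hx⟩ : U.Nonempty :=
        card_pos.mp (by simp only [List.length_nil] at ht hdone; omega)
      simpa using hpush x hx
    have ha : ∀ u ∈ U, ¬ F.Adj a u := fun u hu hau => by simpa [hau.symm] using hpush u hu
    exact (h.pop ha).exists_card_add_length_eq hF
      (by simp only [List.length_cons] at ht hdone; omega)
termination_by 2 * #U + l.length

theorem card_union_toFinset {U : Finset V} {l : List V} (h : F.IsDFSState n S U l) :
    #(U ∪ l.toFinset) = #U + l.length := by
  rw [card_union_of_disjoint (disjoint_right.mpr fun a ha => h.notMem_unvisited a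
    (List.mem_toFinset.mp ha)), List.toFinset_card_of_nodup h.nodup]

end IsDFSState

variable [DecidableEq V] {n : ℕ}

theorem exists_noEdgeBetween_of_not_hasPath (hF : ¬ F.HasPath n) (hn : 0 < n) (S : Finset V)
    {d : ℕ} (hd : d ≤ #S) :
    ∃ D U, D ⊆ S ∧ U ⊆ S ∧ Disjoint D U ∧ F.NoEdgeBetween D U ∧ #D = d ∧
      #S ≤ #U + d + (n - 1) := by
  obtain ⟨U, l, h, hcard⟩ := (IsDFSState.init (F := F) (S := S) hn).exists_card_add_length_eq hF
    (t := #S - d) (by simp)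
  have hsub : U ∪ l.toFinset ⊆ S :=
    union_subset h.unvisited_subset fun a ha => h.stack_subset a (List.mem_toFinset.mp ha)
  have hlen := h.length_lt
  refine ⟨S \ (U ∪ l.toFinset), U, sdiff_subset, h.unvisited_subset,
    disjoint_sdiff_self_left.mono_right subset_union_left, fun x hx u hu => ?_, ?_, by omega⟩
  · simp only [mem_sdiff, mem_union, List.mem_toFinset, not_or] at hx
    exact h.noEdge_finished x hx.1 hx.2.1 hx.2.2 u hu
  · rw [card_sdiff_of_subset hsub, h.card_union_toFinset]
    omega

/-- The search in `F₁` is stopped at `3n` finished vertices `D` (unvisited set `U`), the search in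
`F₂` inside `D ∪ U` at `2n` finished vertices `Z` (unvisited set `W`). Then neither
`(Z ∩ D, W ∩ U)` nor `(Z ∩ U, W ∩ D)` spans an edge of `G`, which joinedness forbids. -/
theorem IsJoined.hasPath_or_hasPath [Fintype V] {G F₁ F₂ : SimpleGraph V} (hG : G.IsJoined n)
    (hV : 7 * n ≤ Fintype.card V) (hcover : G ≤ F₁ ⊔ F₂) : F₁.HasPath n ∨ F₂.HasPath n := by
  by_contra! hF
  have hn := hG.pos
  obtain ⟨D, U, -, -, hDU, hD₁, hDcard, hUcard⟩ :=
    exists_noEdgeBetween_of_not_hasPath hF.1 hn univ (d := 3 * n) (by simp; omega)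
  rw [card_univ] at hUcard
  have hS : #(D ∪ U) = #D + #U := card_union_of_disjoint hDU
  obtain ⟨Z, W, hZ, hW, hZW, hZ₂, hZcard, hWcard⟩ :=
    exists_noEdgeBetween_of_not_hasPath hF.2 hn (D ∪ U) (d := 2 * n) (by omega)
  have h₁ := hG.card_lt_or_card_lt hcover (hZW.mono inter_subset_left inter_subset_left)
    (hD₁.mono (A' := Z ∩ D) (B' := W ∩ U) inter_subset_right inter_subset_right)
    (hZ₂.mono inter_subset_left inter_subset_left)
  have h₂ := hG.card_lt_or_card_lt hcover (hZW.mono inter_subset_left inter_subset_left)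
    (hD₁.symm.mono (A' := Z ∩ U) (B' := W ∩ D) inter_subset_right inter_subset_right)
    (hZ₂.mono inter_subset_left inter_subset_left)
  have := card_inter_add_card_inter_of_subset_union hDU hZ
  have := card_inter_add_card_inter_of_subset_union hDU hW
  have := card_inter_add_card_inter_le hZW D
  have := card_inter_add_card_inter_le hZW U
  omega

def crossEdges (A B : Finset V) : Finset (Sym2 V) :=
  (A ×ˢ B).image fun x => s(x.1, x.2)

theorem mem_crossEdges {A B : Finset V} {e : Sym2 V} :
    e ∈ crossEdges A B ↔ ∃ a ∈ A, ∃ b ∈ B, s(a, b) = e := by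
  simp [crossEdges, and_assoc]

theorem card_crossEdges {A B : Finset V} (hAB : Disjoint A B) :
    #(crossEdges A B) = #A * #B := by
  rw [crossEdges, card_image_of_injOn, card_product]
  rintro ⟨a, b⟩ hab ⟨c, d⟩ hcd h
  simp only [coe_product, Set.mem_prod, mem_coe] at hab hcd
  rcases Sym2.eq_iff.mp h with ⟨rfl, rfl⟩ | ⟨rfl, rfl⟩
  · rfl
  · exact absurd hab.1 (disjoint_right.mp hAB hcd.2)

theorem exists_fromEdgeSet_adj {X : Finset (Sym2 V)} {A B : Finset V} (hAB : Disjoint A B)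
    (hX : ¬ Disjoint X (crossEdges A B)) :
    ∃ a ∈ A, ∃ b ∈ B, (fromEdgeSet (X : Set (Sym2 V))).Adj a b := by
  obtain ⟨e, heX, he⟩ := not_disjoint_iff.mp hX
  obtain ⟨a, ha, b, hb, rfl⟩ := mem_crossEdges.mp he
  exact ⟨a, ha, b, hb, heX, fun hab => Finset.disjoint_left.mp hAB ha (hab ▸ hb)⟩

section RandomGraph

variable [Fintype V]

theorem crossEdges_subset_edgeFinset_top {A B : Finset V} (hAB : Disjoint A B) :
    crossEdges A B ⊆ (⊤ : SimpleGraph V).edgeFinset := fun e he => by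
  obtain ⟨a, ha, b, hb, rfl⟩ := mem_crossEdges.mp he
  simpa using fun hab : a = b => Finset.disjoint_left.mp hAB ha (hab ▸ hb)

theorem ncard_edgeSet_fromEdgeSet {X : Finset (Sym2 V)}
    (hX : X ⊆ (⊤ : SimpleGraph V).edgeFinset) :
    (fromEdgeSet (X : Set (Sym2 V))).edgeSet.ncard = #X := by
  rw [edgeSet_fromEdgeSet, _root_.sdiff_eq_self_iff_disjoint.mpr, Set.ncard_coe_finset]
  refine Set.disjoint_left.mpr fun e he heX => ?_
  simpa [he] using hX heX

/-- Union bound over the pairs `(A, B)` of disjoint `n`-sets: a uniformly random set of `M` edges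
of the complete graph misses the `n²` edges between `A` and `B` with probability
`C(C(|V|, 2) - n², M) / C(C(|V|, 2), M)`. -/
theorem exists_isJoined_ncard_eq {n M : ℕ}
    (h : (Fintype.card V).choose n * (Fintype.card V - n).choose n *
      ((Fintype.card V).choose 2 - n ^ 2).choose M < ((Fintype.card V).choose 2).choose M) :
    ∃ G : SimpleGraph V, G.edgeSet.ncard = M ∧ G.IsJoined n := by
  set I := (univ.powersetCard n).sigma fun A : Finset V => (univ \ A).powersetCard n
  have hI : ∀ p ∈ I, #p.1 = n ∧ #p.2 = n ∧ Disjoint p.1 p.2 := fun p hp => by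
    simp only [I, mem_sigma, mem_powersetCard, subset_univ, true_and, Finset.subset_sdiff] at hp
    exact ⟨hp.1, hp.2.2, hp.2.1.symm⟩
  have hcardI : #I = (Fintype.card V).choose n * (Fintype.card V - n).choose n :=
    card_sigma_powersetCard_sdiff univ n
  obtain ⟨X, hXE, hXcard, hX⟩ := exists_subset_card_eq_forall_not_disjoint
    (⊤ : SimpleGraph V).edgeFinset I (fun p => crossEdges p.1 p.2) (m := n ^ 2)
    (fun p hp => crossEdges_subset_edgeFinset_top (hI p hp).2.2)
    (fun p hp => by rw [card_crossEdges (hI p hp).2.2, (hI p hp).1, (hI p hp).2.1, sq])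
    (by rwa [hcardI, card_edgeFinset_top_eq_card_choose_two])
  refine ⟨fromEdgeSet ↑X, by rw [ncard_edgeSet_fromEdgeSet hXE, hXcard],
    fun A B hAB hA hB => ?_⟩
  obtain ⟨A', hA', hA'card⟩ := exists_subset_card_eq hA
  obtain ⟨B', hB', hB'card⟩ := exists_subset_card_eq hB
  have hAB' := hAB.mono hA' hB'
  have hmem : (⟨A', B'⟩ : Σ _ : Finset V, Finset V) ∈ I := by
    simp only [I, mem_sigma, mem_powersetCard, subset_univ, true_and, Finset.subset_sdiff]
    exact ⟨hA'card, hAB'.symm, hB'card⟩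
  have hmeet : ¬ Disjoint X (crossEdges A' B') := hX _ hmem
  obtain ⟨a, ha, b, hb, hab⟩ := exists_fromEdgeSet_adj hAB' hmeet
  exact ⟨a, hA' ha, b, hB' hb, hab⟩

end RandomGraph

end SimpleGraph

/-- Theorem 1.1: for all sufficiently large `n`, `r̂(P_n) < 137 n`, i.e. there is
a graph with fewer than `137 n` edges every 2-colouring of which contains a
monochromatic path on `n` vertices. -/
theorem stmt15 : ∀ᶠ n : ℕ in Filter.atTop,
    ∃ (N : ℕ) (G : SimpleGraph (Fin N)),
      G.edgeSet.ncard < 137 * n ∧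
      ∀ blue ≤ G,
        (∃ (u v : Fin N) (p : blue.Walk u v), p.IsPath ∧ p.support.length = n) ∨
        (∃ (u v : Fin N) (p : (G \ blue).Walk u v), p.IsPath ∧ p.support.length = n) := by
  filter_upwards [Filter.eventually_ge_atTop 6] with n hn
  obtain ⟨G, hcard, hG⟩ := SimpleGraph.exists_isJoined_ncard_eq (V := Fin (7 * n)) (n := n)
    (M := 137 * n - 1) (by simpa [show 7 * n - n = 6 * n by omega] using
      choose_mul_choose_mul_choose_lt hn)
  exact ⟨7 * n, G, by omega, fun blue _ => hG.hasPath_or_hasPath (by simp) le_sup_sdiff⟩
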